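/- (Mean-field bound for the ferromagnetic/pure state of the DHM.) For every β > 0, J > 0, σ ∈ (1/2,1), h ∈ ℝ and every real m, the thermodynamic-limit free energy satisfies f(h,β,J,σ) ≥ log 2 + log cosh(βh + βJ C_{2σ−1} m) − (βJ C_{2σ})/2 − (βJ C_{2σ−1}/2) m². -/

import Mathlib

open Real Filter

/-- The ±1 value of a Boolean spin. -/
noncomputable def spin (b : Bool) : ℝ := if b then 1 else -1

/-- Embedding of the first half of the sites. -/
def finLeft {k : ℕ} (i : Fin (2 ^ k)) : Fin (2 ^ (k + 1)) :=
  ⟨i.1, lt_of_lt_of_le i.2 (Nat.pow_le_pow_right (by norm_num) (Nat.le_succ k))⟩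

/-- Embedding of the second half of the sites. -/
def finRight {k : ℕ} (i : Fin (2 ^ k)) : Fin (2 ^ (k + 1)) :=
  ⟨i.1 + 2 ^ k, by
    have h2 : 2 ^ (k + 1) = 2 ^ k + 2 ^ k := by rw [pow_succ]; ring
    have := i.2; omega⟩

/-- The Dyson hierarchical model Hamiltonian, defined recursively. -/
noncomputable def dysonH (J σ : ℝ) : (k : ℕ) → (Fin (2 ^ k) → Bool) → ℝ
  | 0, _ => 0
  | (k + 1), S =>
      dysonH J σ k (fun i => S (finLeft i)) + dysonH J σ k (fun i => S (finRight i)) -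
        J / (2 : ℝ) ^ (2 * σ * ((k : ℝ) + 1)) *
          ∑ i : Fin (2 ^ (k + 1)), ∑ j : Fin (2 ^ (k + 1)),
            if i < j then spin (S i) * spin (S j) else 0

/-- The finite-volume free energy of the Dyson hierarchical model. -/
noncomputable def dysonF (h β J σ : ℝ) (k : ℕ) : ℝ :=
  ((2 : ℝ) ^ k)⁻¹ * Real.log (∑ S : Fin (2 ^ k) → Bool,
    Real.exp (-β * dysonH J σ k S + β * h * ∑ i, spin (S i)))

/-- The constant `C_y = 2^{-y} / (1 - 2^{-y})`. -/
noncomputable def Cconst (y : ℝ) : ℝ := (2 : ℝ) ^ (-y) / (1 - (2 : ℝ) ^ (-y))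

/-!
Within a block of size `N` with magnetization `M`, `∑_{i<j} S_i S_j = (M² - N) / 2`, and
`(M - m N)² ≥ 0` bounds this below by a function that is linear in the spins. Summing over the
levels of the hierarchy, `-H_k` dominates `J m A_k M - 2^k J (m² A_k + B_k) / 2`, where `A_k`, `B_k`
are the partial sums of the geometric series `C_{2σ-1}`, `C_{2σ}`. The partition function is then
bounded below by that of independent spins in the field `h + J A_k m`, which is
`(2 cosh (β h + β J A_k m))^{2^k}` up to the constant factor; letting `k → ∞` gives the bound.
-/

lemma spin_mul_self (b : Bool) : spin b * spin b = 1 := by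
  cases b <;> norm_num [spin]

lemma two_mul_sum_lt_add_sum_mul_self {ι : Type*} [Fintype ι] [LinearOrder ι] (x : ι → ℝ) :
    2 * ∑ i, ∑ j, (if i < j then x i * x j else 0) + ∑ i, x i * x i = (∑ i, x i) ^ 2 := by
  have hsplit : ∀ i j, x i * x j = (if i < j then x i * x j else 0)
      + (if j < i then x j * x i else 0) + (if i = j then x i * x j else 0) := by
    intro i j
    rcases lt_trichotomy i j with h | rfl | h
    · simp [h, h.not_gt, h.ne]
    · simp
    · simp [h, h.not_gt, h.ne', mul_comm]
  have hswap : ∑ i, ∑ j, (if j < i then x j * x i else 0)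
      = ∑ i, ∑ j, (if i < j then x i * x j else 0) := Finset.sum_comm
  rw [sq, Finset.sum_mul_sum]
  rw [Finset.sum_congr rfl fun i _ => Finset.sum_congr rfl fun j _ => hsplit i j]
  simp only [Finset.sum_add_distrib]
  rw [hswap]
  simp only [Finset.sum_ite_eq, Finset.mem_univ, if_true]
  ring

noncomputable def magnetization {ι : Type*} [Fintype ι] (S : ι → Bool) : ℝ := ∑ i, spin (S i)

lemma mean_field_le_sum_lt_spin_mul {ι : Type*} [Fintype ι] [LinearOrder ι] (S : ι → Bool)
    (m : ℝ) :
    m * Fintype.card ι * magnetization S - (m ^ 2 * (Fintype.card ι : ℝ) ^ 2 + Fintype.card ι) / 2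
      ≤ ∑ i, ∑ j, (if i < j then spin (S i) * spin (S j) else 0) := by
  have hpairs := two_mul_sum_lt_add_sum_mul_self fun i => spin (S i)
  simp only [spin_mul_self, Finset.sum_const, Finset.card_univ, nsmul_eq_mul, mul_one] at hpairs
  rw [magnetization]
  nlinarith [sq_nonneg (∑ i, spin (S i) - m * Fintype.card ι)]

lemma sum_exp_mul_magnetization {ι : Type*} [Fintype ι] [DecidableEq ι] (t : ℝ) :
    ∑ S : ι → Bool, Real.exp (t * magnetization S) = (2 * Real.cosh t) ^ Fintype.card ι := by
  have hfactor : ∀ S : ι → Bool,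
      Real.exp (t * magnetization S) = ∏ i, Real.exp (t * spin (S i)) := by
    intro S
    rw [magnetization, Finset.mul_sum, Real.exp_sum]
  simp_rw [hfactor, ← Fintype.prod_sum fun (_ : ι) b => Real.exp (t * spin b)]
  rw [Real.cosh_eq, mul_div_cancel₀ _ two_ne_zero]
  simp [spin]

lemma sum_fin_two_pow_succ {k : ℕ} (f : Fin (2 ^ (k + 1)) → ℝ) :
    ∑ i, f i = ∑ i, f (finLeft i) + ∑ i, f (finRight i) := by
  have hcard : 2 ^ k + 2 ^ k = 2 ^ (k + 1) := by rw [pow_succ]; ring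
  rw [← (finSumFinEquiv.trans (finCongr hcard)).sum_comp, Fintype.sum_sum_type]
  congr 1
  exact Finset.sum_congr rfl fun i _ => congrArg f (Fin.ext (by simp [finRight]))

lemma magnetization_succ {k : ℕ} (S : Fin (2 ^ (k + 1)) → Bool) :
    magnetization S
      = magnetization (fun i => S (finLeft i)) + magnetization (fun i => S (finRight i)) :=
  sum_fin_two_pow_succ _

noncomputable def CconstPartial (y : ℝ) (k : ℕ) : ℝ :=
  ∑ l ∈ Finset.range k, (2 : ℝ) ^ (-y * ((l : ℝ) + 1))

lemma tendsto_CconstPartial {y : ℝ} (hy : 0 < y) :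
    Tendsto (CconstPartial y) atTop (nhds (Cconst y)) := by
  set r : ℝ := (2 : ℝ) ^ (-y)
  have hr0 : 0 ≤ r := by positivity
  have hr1 : r < 1 := Real.rpow_lt_one_of_one_lt_of_neg one_lt_two (neg_lt_zero.2 hy)
  have hterm : ∀ l : ℕ, (2 : ℝ) ^ (-y * ((l : ℝ) + 1)) = r * r ^ l := by
    intro l
    rw [← pow_succ', ← Real.rpow_natCast, ← Real.rpow_mul zero_le_two]
    push_cast
    ring_nf
  have hpartial : CconstPartial y = fun k => r * ∑ l ∈ Finset.range k, r ^ l := by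
    ext k
    simp only [CconstPartial, hterm, Finset.mul_sum]
  rw [hpartial, Cconst, div_eq_mul_inv]
  exact (hasSum_geometric_of_lt_one hr0 hr1).tendsto_sum_nat.const_mul r

lemma two_pow_succ_div_two_rpow (σ : ℝ) (k : ℕ) :
    (2 : ℝ) ^ (k + 1) / (2 : ℝ) ^ (2 * σ * ((k : ℝ) + 1))
      = (2 : ℝ) ^ (-(2 * σ - 1) * ((k : ℝ) + 1)) := by
  rw [← Real.rpow_natCast, ← Real.rpow_sub two_pos]
  push_cast
  ring_nf

lemma one_div_two_rpow (σ : ℝ) (k : ℕ) :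
    1 / (2 : ℝ) ^ (2 * σ * ((k : ℝ) + 1)) = (2 : ℝ) ^ (-(2 * σ) * ((k : ℝ) + 1)) := by
  rw [one_div, ← Real.rpow_neg zero_le_two]
  ring_nf

lemma mean_field_le_neg_dysonH {J : ℝ} (hJ : 0 ≤ J) (σ m : ℝ) (k : ℕ) (S : Fin (2 ^ k) → Bool) :
    J * m * CconstPartial (2 * σ - 1) k * magnetization S
        - 2 ^ k * J / 2 * (m ^ 2 * CconstPartial (2 * σ - 1) k + CconstPartial (2 * σ) k)
      ≤ -dysonH J σ k S := by
  induction k with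
  | zero => simp [CconstPartial, dysonH]
  | succ k ih =>
    have hpairs := mean_field_le_sum_lt_spin_mul S m
    simp only [Fintype.card_fin, Nat.cast_pow, Nat.cast_ofNat] at hpairs
    have hc : 0 ≤ J / (2 : ℝ) ^ (2 * σ * ((k : ℝ) + 1)) := by positivity
    rw [dysonH, magnetization_succ, CconstPartial, CconstPartial, Finset.sum_range_succ,
      Finset.sum_range_succ, ← CconstPartial, ← CconstPartial, ← two_pow_succ_div_two_rpow σ k,
      ← one_div_two_rpow σ k]
    have := mul_le_mul_of_nonneg_left hpairs hc
    have hL := ih fun i => S (finLeft i)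
    have hR := ih fun i => S (finRight i)
    rw [magnetization_succ] at this
    linear_combination hL + hR + this

lemma mean_field_le_dysonF {β J : ℝ} (hβ : 0 ≤ β) (hJ : 0 ≤ J) (h σ m : ℝ) (k : ℕ) :
    Real.log 2 + Real.log (Real.cosh (β * h + β * J * CconstPartial (2 * σ - 1) k * m))
        - β * J * CconstPartial (2 * σ) k / 2 - β * J * CconstPartial (2 * σ - 1) k / 2 * m ^ 2
      ≤ dysonF h β J σ k := by
  set t := β * h + β * J * CconstPartial (2 * σ - 1) k * m
  set c := β * 2 ^ k * J / 2 * (m ^ 2 * CconstPartial (2 * σ - 1) k + CconstPartial (2 * σ) k)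
  have hZ : Real.exp (-c) * (2 * Real.cosh t) ^ 2 ^ k
      ≤ ∑ S : Fin (2 ^ k) → Bool, Real.exp (-β * dysonH J σ k S + β * h * ∑ i, spin (S i)) := by
    have hpartition := sum_exp_mul_magnetization (ι := Fin (2 ^ k)) t
    rw [Fintype.card_fin] at hpartition
    rw [← hpartition, Finset.mul_sum]
    refine Finset.sum_le_sum fun S _ => ?_
    rw [← Real.exp_add, Real.exp_le_exp]
    have := mul_le_mul_of_nonneg_left (mean_field_le_neg_dysonH hJ σ m k S) hβ
    simp only [magnetization] at this ⊢
    linear_combination this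
  have hlog := Real.log_le_log (by positivity) hZ
  rw [Real.log_mul (by positivity) (by positivity), Real.log_exp, Real.log_pow,
    Real.log_mul two_ne_zero (Real.cosh_pos t).ne'] at hlog
  rw [dysonF, le_inv_mul_iff₀ (by positivity)]
  push_cast at hlog
  linear_combination hlog

/-- mean-field bound for the pure (ferromagnetic) state of the DHM. -/
theorem dyson_mean_field_pure_bound (β J σ h m : ℝ) (hβ : 0 < β) (hJ : 0 < J)
    (hσ : σ ∈ Set.Ioo (1 / 2 : ℝ) 1) (F : ℝ)
    (hF : Tendsto (fun k => dysonF h β J σ k) atTop (nhds F)) :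
    F ≥ Real.log 2 + Real.log (Real.cosh (β * h + β * J * Cconst (2 * σ - 1) * m)) -
        β * J * Cconst (2 * σ) / 2 - β * J * Cconst (2 * σ - 1) / 2 * m ^ 2 := by
  have hA := tendsto_CconstPartial (y := 2 * σ - 1) (by linarith [hσ.1])
  have hB := tendsto_CconstPartial (y := 2 * σ) (by linarith [hσ.1])
  refine le_of_tendsto_of_tendsto' ?_ hF (mean_field_le_dysonF hβ.le hJ.le h σ m)
  have hcont : Continuous fun p : ℝ × ℝ => Real.log 2
      + Real.log (Real.cosh (β * h + β * J * p.1 * m))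
      - β * J * p.2 / 2 - β * J * p.1 / 2 * m ^ 2 := by
    fun_prop (disch := exact fun p => (Real.cosh_pos _).ne')
  have hlimit := (hcont.tendsto _).comp (hA.prodMk_nhds hB)
  exact hlimit
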